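/- Fix real constants p, q, r, s. The forward map Φ and the backward map Ψ are mutually inverse: (i) for all (T,X,Y,Z) with ζ(T,Z) ≠ 0 and ξ(T,Z) ≠ 0, Ψ(Φ(T,X,Y,Z)) = (T,X,Y,Z); (ii) for all (t,x,y,z) with f(t,z) ≠ 0 and g(t,z) ≠ 0, Φ(Ψ(t,x,y,z)) = (t,x,y,z). Moreover, writing Φ(T,X,Y,Z) = (t,x,y,z), one has t − z = T − Z. -/

import Mathlib

noncomputable section

/-- ζ(T,Z) = p + q(T−Z)/√2. -/
def zeta (p q T Z : ℝ) : ℝ := p + q * ((T - Z) / Real.sqrt 2)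

/-- ξ(T,Z) = r + s(T−Z)/√2. -/
def xi (r s T Z : ℝ) : ℝ := r + s * ((T - Z) / Real.sqrt 2)

/-- The forward map Φ : (T,X,Y,Z) ↦ (t,x,y,z) from Fermi coordinates to the
original wave coordinates in the post-wave region B, Eqs. (FT2)-(FT5). -/
def fwd (p q r s : ℝ) : ℝ × ℝ × ℝ × ℝ → ℝ × ℝ × ℝ × ℝ :=
  fun (T, X, Y, Z) =>
    (T - q * X ^ 2 / (2 * Real.sqrt 2 * zeta p q T Z)
       - s * Y ^ 2 / (2 * Real.sqrt 2 * xi r s T Z),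
     X / zeta p q T Z,
     Y / xi r s T Z,
     Z - q * X ^ 2 / (2 * Real.sqrt 2 * zeta p q T Z)
       - s * Y ^ 2 / (2 * Real.sqrt 2 * xi r s T Z))

/-- f(t,z) = p + q(t−z)/√2. -/
def fmet (p q t z : ℝ) : ℝ := p + q * ((t - z) / Real.sqrt 2)

/-- g(t,z) = r + s(t−z)/√2. -/
def gmet (r s t z : ℝ) : ℝ := r + s * ((t - z) / Real.sqrt 2)

/-- The backward map Ψ : (t,x,y,z) ↦ (T,X,Y,Z), Eqs. (FT7.1)-(FT7.4). -/
def bwd (p q r s : ℝ) : ℝ × ℝ × ℝ × ℝ → ℝ × ℝ × ℝ × ℝ :=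
  fun (t, x, y, z) =>
    (t + (Real.sqrt 2 * (p * q * x ^ 2 + r * s * y ^ 2)
          + (q ^ 2 * x ^ 2 + s ^ 2 * y ^ 2) * (t - z)) / 4,
     x * fmet p q t z,
     y * gmet r s t z,
     z + (Real.sqrt 2 * (p * q * x ^ 2 + r * s * y ^ 2)
          + (q ^ 2 * x ^ 2 + s ^ 2 * y ^ 2) * (t - z)) / 4)

/-!
Both maps translate the two null coordinates by the same amount, so they preserve `t - z` and
hence the transverse coefficients: `f(t,z) = ζ(T,Z)` and `g(t,z) = ξ(T,Z)`. The transverse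
coordinates are rescaled by these coefficients, and the common translation is the quadratic form
`(q x² a + s y² b) / (2√2)`, with weights `(a, b) = (f, g)` in wave coordinates and
`(ζ⁻¹, ξ⁻¹)` in Fermi coordinates; it is invariant under `(x, a) ↦ (x a, a⁻¹)`.
-/

def fermiShift (q s a b x y : ℝ) : ℝ := (q * x ^ 2 * a + s * y ^ 2 * b) / (2 * Real.sqrt 2)

theorem fermiShift_inv_mul (q s a b x y : ℝ) :
    fermiShift q s a⁻¹ b⁻¹ (x * a) (y * b) = fermiShift q s a b x y := by
  unfold fermiShift
  field_simp

section

variable (p q r s : ℝ)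

theorem fmet_sub_sub (T Z c : ℝ) : fmet p q (T - c) (Z - c) = zeta p q T Z := by
  rw [fmet, zeta, sub_sub_sub_cancel_right]

theorem gmet_sub_sub (T Z c : ℝ) : gmet r s (T - c) (Z - c) = xi r s T Z := by
  rw [gmet, xi, sub_sub_sub_cancel_right]

theorem zeta_add_add (t z c : ℝ) : zeta p q (t + c) (z + c) = fmet p q t z := by
  rw [zeta, fmet, add_sub_add_right_eq_sub]

theorem xi_add_add (t z c : ℝ) : xi r s (t + c) (z + c) = gmet r s t z := by
  rw [xi, gmet, add_sub_add_right_eq_sub]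

theorem fwd_apply (T X Y Z : ℝ) :
    fwd p q r s (T, X, Y, Z) =
      (T - fermiShift q s (zeta p q T Z)⁻¹ (xi r s T Z)⁻¹ X Y, X / zeta p q T Z,
        Y / xi r s T Z, Z - fermiShift q s (zeta p q T Z)⁻¹ (xi r s T Z)⁻¹ X Y) := by
  simp only [fwd, fermiShift, Prod.mk.injEq, true_and]
  constructor <;> ring

theorem bwd_apply (t x y z : ℝ) :
    bwd p q r s (t, x, y, z) =
      (t + fermiShift q s (fmet p q t z) (gmet r s t z) x y, x * fmet p q t z,
        y * gmet r s t z, z + fermiShift q s (fmet p q t z) (gmet r s t z) x y) := by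
  have hshift : (Real.sqrt 2 * (p * q * x ^ 2 + r * s * y ^ 2)
      + (q ^ 2 * x ^ 2 + s ^ 2 * y ^ 2) * (t - z)) / 4
      = fermiShift q s (fmet p q t z) (gmet r s t z) x y := by
    have h2 : Real.sqrt 2 ^ 2 = 2 := Real.sq_sqrt zero_le_two
    unfold fermiShift fmet gmet
    field_simp
    linear_combination 2 * (Real.sqrt 2 * (p * q * x ^ 2 + r * s * y ^ 2)
      + (q ^ 2 * x ^ 2 + s ^ 2 * y ^ 2) * (t - z)) * h2
  simp only [bwd, hshift]

theorem fwd_fst_sub_snd_snd_snd (T X Y Z : ℝ) :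
    (fwd p q r s (T, X, Y, Z)).1 - (fwd p q r s (T, X, Y, Z)).2.2.2 = T - Z := by
  rw [fwd_apply, sub_sub_sub_cancel_right]

theorem bwd_fwd {T Z : ℝ} (X Y : ℝ) (hζ : zeta p q T Z ≠ 0) (hξ : xi r s T Z ≠ 0) :
    bwd p q r s (fwd p q r s (T, X, Y, Z)) = (T, X, Y, Z) := by
  have hshift : fermiShift q s (zeta p q T Z) (xi r s T Z) (X / zeta p q T Z) (Y / xi r s T Z)
      = fermiShift q s (zeta p q T Z)⁻¹ (xi r s T Z)⁻¹ X Y := by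
    simpa only [inv_inv, div_eq_mul_inv] using
      fermiShift_inv_mul q s (zeta p q T Z)⁻¹ (xi r s T Z)⁻¹ X Y
  rw [fwd_apply, bwd_apply, fmet_sub_sub, gmet_sub_sub, hshift, div_mul_cancel₀ X hζ,
    div_mul_cancel₀ Y hξ, sub_add_cancel, sub_add_cancel]

theorem fwd_bwd {t z : ℝ} (x y : ℝ) (hf : fmet p q t z ≠ 0) (hg : gmet r s t z ≠ 0) :
    fwd p q r s (bwd p q r s (t, x, y, z)) = (t, x, y, z) := by
  rw [bwd_apply, fwd_apply, zeta_add_add, xi_add_add, fermiShift_inv_mul,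
    mul_div_cancel_right₀ x hf, mul_div_cancel_right₀ y hg, add_sub_cancel_right,
    add_sub_cancel_right]

end

/-- The Fermi coordinate transformation Φ and its inverse Ψ are mutually
inverse (where the denominators are nonzero), and Φ preserves t − z = T − Z. -/
theorem fermi_transformation_inverse (p q r s : ℝ) :
    (∀ T X Y Z : ℝ, zeta p q T Z ≠ 0 → xi r s T Z ≠ 0 →
      bwd p q r s (fwd p q r s (T, X, Y, Z)) = (T, X, Y, Z)) ∧
    (∀ t x y z : ℝ, fmet p q t z ≠ 0 → gmet r s t z ≠ 0 →
      fwd p q r s (bwd p q r s (t, x, y, z)) = (t, x, y, z)) ∧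
    (∀ T X Y Z : ℝ,
      (fwd p q r s (T, X, Y, Z)).1 - (fwd p q r s (T, X, Y, Z)).2.2.2 = T - Z) :=
  ⟨fun _ X Y _ ↦ bwd_fwd p q r s X Y, fun _ x y _ ↦ fwd_bwd p q r s x y,
    fwd_fst_sub_snd_snd_snd p q r s⟩
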